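/- Let Ω ⊆ ℝ² be open, let ζ, v : Ω → ℝ be twice continuously differentiable, and fix l ∈ {1, 2} with e_l the l-th standard basis vector of ℝ². Then at every point of Ω: div( (∇ζ) ∂_l v + (∇v) ∂_l ζ − (∇ζ · ∇v) e_l ) = (Δζ) ∂_l v + (Δv) ∂_l ζ, where ∂_l denotes the partial derivative in the l-th coordinate direction. -/

import Mathlib

/-- Partial derivative in the first coordinate direction. -/
noncomputable def pd1 (f : ℝ × ℝ → ℝ) (z : ℝ × ℝ) : ℝ :=
  deriv (fun x => f (x, z.2)) z.1

/-- Partial derivative in the second coordinate direction. -/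
noncomputable def pd2 (f : ℝ × ℝ → ℝ) (z : ℝ × ℝ) : ℝ :=
  deriv (fun y => f (z.1, y)) z.2

/-- Partial derivative in the `l`-th coordinate direction. -/
noncomputable def pd (l : Fin 2) (f : ℝ × ℝ → ℝ) (z : ℝ × ℝ) : ℝ :=
  if l = 0 then pd1 f z else pd2 f z

/-- The `l`-th standard basis vector of `ℝ²`. -/
def stdBasis (l : Fin 2) : ℝ × ℝ := if l = 0 then (1, 0) else (0, 1)

/-- Gradient of a scalar function on `ℝ²`. -/
noncomputable def grad (f : ℝ × ℝ → ℝ) (z : ℝ × ℝ) : ℝ × ℝ :=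
  (pd1 f z, pd2 f z)

/-- Divergence of a vector field on `ℝ²`. -/
noncomputable def divg (F : ℝ × ℝ → ℝ × ℝ) (z : ℝ × ℝ) : ℝ :=
  pd1 (fun w => (F w).1) z + pd2 (fun w => (F w).2) z

/-- The standard Laplacian on `ℝ²`. -/
noncomputable def lap (f : ℝ × ℝ → ℝ) (z : ℝ × ℝ) : ℝ :=
  deriv (deriv (fun x => f (x, z.2))) z.1 + deriv (deriv (fun y => f (z.1, y))) z.2

/-- Euclidean inner product on `ℝ²`. -/
def dot (p q : ℝ × ℝ) : ℝ := p.1 * q.1 + p.2 * q.2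

/-!
For curl-free fields `A`, `B` on `ℝ²` and a constant vector `e`, the product rule gives
`div((B·e) A + (A·e) B - (A·B) e) = (div A)(B·e) + (div B)(A·e)` plus terms that are multiples of
`curl A` and `curl B`, hence vanish. The theorem is the case `A = ∇ζ`, `B = ∇v`, `e = e_l`: the
divergence of a gradient is the Laplacian, and the curl of the gradient of a `C²` function vanishes
by the symmetry of second derivatives.
-/

open Filter Topology

noncomputable def curl (A : ℝ × ℝ → ℝ × ℝ) (z : ℝ × ℝ) : ℝ :=
  pd1 (fun w => (A w).2) z - pd2 (fun w => (A w).1) z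

section FirstOrder

variable {g : ℝ × ℝ → ℝ} {L : ℝ × ℝ →L[ℝ] ℝ} {z : ℝ × ℝ}

theorem HasFDerivAt.pd1_eq (h : HasFDerivAt g L z) : pd1 g z = L (1, 0) :=
  (h.comp_hasDerivAt z.1 ((hasDerivAt_id z.1).prodMk (hasDerivAt_const z.1 z.2))).deriv

theorem HasFDerivAt.pd2_eq (h : HasFDerivAt g L z) : pd2 g z = L (0, 1) :=
  (h.comp_hasDerivAt z.2 ((hasDerivAt_const z.2 z.1).prodMk (hasDerivAt_id z.2))).deriv

theorem pd_eq_dot_grad (l : Fin 2) (f : ℝ × ℝ → ℝ) (w : ℝ × ℝ) :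
    pd l f w = dot (grad f w) (stdBasis l) := by
  fin_cases l <;> simp [pd, grad, dot, stdBasis]

theorem divg_grad (f : ℝ × ℝ → ℝ) (z : ℝ × ℝ) : divg (grad f) z = lap f z := rfl

end FirstOrder

theorem divg_dot_smul_add_dot_smul_sub_dot_smul {A B : ℝ × ℝ → ℝ × ℝ} {z : ℝ × ℝ}
    (hA : DifferentiableAt ℝ A z) (hB : DifferentiableAt ℝ B z)
    (hA_curl : curl A z = 0) (hB_curl : curl B z = 0) (e : ℝ × ℝ) :
    divg (fun w => dot (B w) e • A w + dot (A w) e • B w - dot (A w) (B w) • e) z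
      = divg A z * dot (B z) e + divg B z * dot (A z) e := by
  have a₁ := hA.fst.hasFDerivAt
  have a₂ := hA.snd.hasFDerivAt
  have b₁ := hB.fst.hasFDerivAt
  have b₂ := hB.snd.hasFDerivAt
  simp only [divg, curl, dot, Prod.fst_add, Prod.fst_sub, Prod.snd_add, Prod.snd_sub,
    Prod.smul_fst, Prod.smul_snd, smul_eq_mul] at hA_curl hB_curl ⊢
  rw [(((((b₁.mul_const e.1).fun_add (b₂.mul_const e.2)).fun_mul a₁).fun_add
      (((a₁.mul_const e.1).fun_add (a₂.mul_const e.2)).fun_mul b₁)).fun_sub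
      (((a₁.fun_mul b₁).fun_add (a₂.fun_mul b₂)).mul_const e.1)).pd1_eq,
    (((((b₁.mul_const e.1).fun_add (b₂.mul_const e.2)).fun_mul a₂).fun_add
      (((a₁.mul_const e.1).fun_add (a₂.mul_const e.2)).fun_mul b₂)).fun_sub
      (((a₁.fun_mul b₁).fun_add (a₂.fun_mul b₂)).mul_const e.2)).pd2_eq]
  simp only [a₁.pd1_eq, a₂.pd1_eq, b₁.pd1_eq, b₂.pd1_eq, a₁.pd2_eq, a₂.pd2_eq, b₁.pd2_eq,
    b₂.pd2_eq] at hA_curl hB_curl ⊢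
  simp only [sub_apply, add_apply, smul_apply, smul_add, smul_eq_mul]
  -- what the product rule leaves over is `(B·e⊥) curl A + (A·e⊥) curl B`, with `e⊥ = (e.2, -e.1)`
  linear_combination (e.2 * (B z).1 - e.1 * (B z).2) * hA_curl
    + (e.2 * (A z).1 - e.1 * (A z).2) * hB_curl

section SecondOrder

variable {f : ℝ × ℝ → ℝ} {z : ℝ × ℝ}

theorem ContDiffAt.hasFDerivAt_fderiv_apply {E F : Type*} [NormedAddCommGroup E]
    [NormedSpace ℝ E] [NormedAddCommGroup F] [NormedSpace ℝ F] {f : E → F} {z : E}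
    (hf : ContDiffAt ℝ 2 f z) (u : E) :
    HasFDerivAt (fun w => fderiv ℝ f w u) ((fderiv ℝ (fderiv ℝ f) z).flip u) z := by
  have hf' := ((hf.fderiv_right (m := 1) le_rfl).differentiableAt one_ne_zero).hasFDerivAt
  simpa using hf'.clm_apply (hasFDerivAt_const u z)

theorem ContDiffAt.pd1_eventuallyEq (hf : ContDiffAt ℝ 2 f z) :
    pd1 f =ᶠ[𝓝 z] fun w => fderiv ℝ f w (1, 0) :=
  (hf.eventually (by simp)).mono fun _ hw => (hw.differentiableAt (by simp)).hasFDerivAt.pd1_eq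

theorem ContDiffAt.pd2_eventuallyEq (hf : ContDiffAt ℝ 2 f z) :
    pd2 f =ᶠ[𝓝 z] fun w => fderiv ℝ f w (0, 1) :=
  (hf.eventually (by simp)).mono fun _ hw => (hw.differentiableAt (by simp)).hasFDerivAt.pd2_eq

theorem ContDiffAt.hasFDerivAt_pd1 (hf : ContDiffAt ℝ 2 f z) :
    HasFDerivAt (pd1 f) ((fderiv ℝ (fderiv ℝ f) z).flip (1, 0)) z :=
  (hf.hasFDerivAt_fderiv_apply _).congr_of_eventuallyEq hf.pd1_eventuallyEq

theorem ContDiffAt.hasFDerivAt_pd2 (hf : ContDiffAt ℝ 2 f z) :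
    HasFDerivAt (pd2 f) ((fderiv ℝ (fderiv ℝ f) z).flip (0, 1)) z :=
  (hf.hasFDerivAt_fderiv_apply _).congr_of_eventuallyEq hf.pd2_eventuallyEq

theorem ContDiffAt.differentiableAt_grad (hf : ContDiffAt ℝ 2 f z) :
    DifferentiableAt ℝ (grad f) z :=
  (hf.hasFDerivAt_pd1.prodMk hf.hasFDerivAt_pd2).differentiableAt

theorem ContDiffAt.curl_grad (hf : ContDiffAt ℝ 2 f z) : curl (grad f) z = 0 := by
  change pd1 (pd2 f) z - pd2 (pd1 f) z = 0
  rw [hf.hasFDerivAt_pd2.pd1_eq, hf.hasFDerivAt_pd1.pd2_eq, ContinuousLinearMap.flip_apply,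
    ContinuousLinearMap.flip_apply, hf.isSymmSndFDerivAt (by simp), sub_self]

end SecondOrder

theorem divergence_identity_mixed_derivatives
    (Ω : Set (ℝ × ℝ)) (hΩ : IsOpen Ω)
    (ζ v : ℝ × ℝ → ℝ)
    (hζ : ContDiffOn ℝ 2 ζ Ω) (hv : ContDiffOn ℝ 2 v Ω)
    (l : Fin 2) :
    ∀ z ∈ Ω,
      divg (fun w =>
          pd l v w • grad ζ w + pd l ζ w • grad v w
            - dot (grad ζ w) (grad v w) • stdBasis l) z
      = lap ζ z * pd l v z + lap v z * pd l ζ z := by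
  intro z hz
  have hζz : ContDiffAt ℝ 2 ζ z := hζ.contDiffAt (hΩ.mem_nhds hz)
  have hvz : ContDiffAt ℝ 2 v z := hv.contDiffAt (hΩ.mem_nhds hz)
  simp only [pd_eq_dot_grad, ← divg_grad]
  exact divg_dot_smul_add_dot_smul_sub_dot_smul hζz.differentiableAt_grad hvz.differentiableAt_grad
    hζz.curl_grad hvz.curl_grad (stdBasis l)
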